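/- Define w:[0,1]²→ℝ by w(s,t) = 1 − exp(−1/(t(1−s))) if (s,t) ∈ [0,1)×(0,1], and w(s,t) = 1 otherwise. Then w is continuous on [0,1]², and with b the floor (integer part) function on [0,1] and s_n = 1 − 1/n one has lim_{n→∞} s_n = 1 while lim_{n→∞} ∫₀¹ b(w(s_n,t)) dt = 0 ≠ 1 = ∫₀¹ b(w(1,t)) dt. Hence the almost-sure continuity of the map (s,x) ↦ ∫₀¹ b(t, x + W_{s,t}) dt along the Brownian sheet fails if the Brownian sheet is replaced by an arbitrary continuous two-parameter function. -/

import Mathlib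

open MeasureTheory Filter Set

noncomputable section

/-- The function `w(s,t) = 1 − exp(−1/(t(1−s)))` for `(s,t) ∈ [0,1)×(0,1]` and
`w(s,t) = 1` otherwise. -/
noncomputable def wfun (s t : ℝ) : ℝ :=
  if s < 1 ∧ 0 < t then 1 - Real.exp (-(1 / (t * (1 - s)))) else 1

/-!
For `s ≤ 1`, `w(s,t) = 1 - g(t(1-s))` with `g = expNegInvGlue` the flat glue function
(`exp(-1/x)` for `x > 0`, `0` otherwise), which gives continuity on `[0,1]²`. For `s < 1` and
`t > 0` one has `0 < g(t(1-s)) < 1`, so `⌊w(s,t)⌋ = 0`, while `w(1,·) ≡ 1`.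
-/

theorem wfun_eq_one_sub_expNegInvGlue {s : ℝ} (hs : s ≤ 1) (t : ℝ) :
    wfun s t = 1 - expNegInvGlue (t * (1 - s)) := by
  by_cases h : s < 1 ∧ 0 < t
  · have hpos : 0 < t * (1 - s) := mul_pos h.2 (sub_pos.2 h.1)
    rw [wfun, if_pos h, expNegInvGlue, if_neg hpos.not_ge, one_div]
  · have hnonpos : t * (1 - s) ≤ 0 := by
      rcases hs.lt_or_eq with hs' | rfl
      · exact mul_nonpos_of_nonpos_of_nonneg (not_lt.1 fun ht => h ⟨hs', ht⟩) (by linarith)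
      · simp
    rw [wfun, if_neg h, expNegInvGlue.zero_of_nonpos hnonpos, sub_zero]

theorem continuousOn_wfun : ContinuousOn (fun p : ℝ × ℝ => wfun p.1 p.2) {p | p.1 ≤ 1} := by
  have hglue : Continuous fun p : ℝ × ℝ => 1 - expNegInvGlue (p.2 * (1 - p.1)) :=
    continuous_const.sub <| (expNegInvGlue.contDiff (n := 0)).continuous.comp (by fun_prop)
  exact hglue.continuousOn.congr fun p hp => wfun_eq_one_sub_expNegInvGlue hp p.2

theorem wfun_one (t : ℝ) : wfun 1 t = 1 := by
  simp [wfun]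

theorem floor_wfun_of_lt_one {s t : ℝ} (hs : s < 1) (ht : 0 < t) : ⌊wfun s t⌋ = 0 := by
  have hpos : 0 < 1 / (t * (1 - s)) := one_div_pos.2 (mul_pos ht (sub_pos.2 hs))
  have hexp_lt_one : Real.exp (-(1 / (t * (1 - s)))) < 1 := Real.exp_lt_one_iff.2 (by linarith)
  rw [wfun, if_pos ⟨hs, ht⟩, Int.floor_eq_zero_iff, Set.mem_Ico]
  constructor <;> linarith [Real.exp_pos (-(1 / (t * (1 - s))))]

theorem integral_floor_wfun_of_lt_one {s : ℝ} (hs : s < 1) :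
    ∫ t in (0:ℝ)..1, (⌊wfun s t⌋ : ℝ) = 0 := by
  have hzero : ∀ t ∈ Set.uIoc (0:ℝ) 1, (⌊wfun s t⌋ : ℝ) = 0 := by
    intro t ht
    rw [Set.uIoc_of_le zero_le_one] at ht
    simp [floor_wfun_of_lt_one hs ht.1]
  rw [intervalIntegral.integral_congr_ae (ae_of_all _ hzero), intervalIntegral.integral_zero]

/-- The function `w` is continuous on `[0,1]²`; with `b = ⌊·⌋` the
integer part function and `s_n = 1 − 1/n`, one has `s_n → 1` while
`lim_{n→∞} ∫₀¹ ⌊w(s_n,t)⌋ dt = 0 ≠ 1 = ∫₀¹ ⌊w(1,t)⌋ dt`.  Hence the almost-sure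
continuity of `(s,x) ↦ ∫₀¹ b(t,x+W_{s,t}) dt` along Brownian sheet paths fails for an
arbitrary continuous two-parameter function in place of the sheet. -/
theorem counterexample_continuity_fails :
    ContinuousOn (fun p : ℝ × ℝ => wfun p.1 p.2) (Set.Icc 0 1 ×ˢ Set.Icc 0 1) ∧
    Tendsto (fun n : ℕ => 1 - 1 / (n : ℝ)) atTop (nhds 1) ∧
    Tendsto (fun n : ℕ => ∫ t in (0:ℝ)..1, (⌊wfun (1 - 1 / (n : ℝ)) t⌋ : ℝ))
      atTop (nhds 0) ∧
    (∫ t in (0:ℝ)..1, (⌊wfun 1 t⌋ : ℝ)) = 1 ∧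
    (0 : ℝ) ≠ 1 := by
  refine ⟨continuousOn_wfun.mono fun p hp => hp.1.2, ?_, ?_, by simp [wfun_one], zero_ne_one⟩
  · simpa using tendsto_const_nhds.sub (tendsto_one_div_atTop_nhds_zero_nat (𝕜 := ℝ))
  · refine tendsto_const_nhds.congr' ?_
    filter_upwards [eventually_ge_atTop 1] with n hn
    have hs : 1 - 1 / (n : ℝ) < 1 := sub_lt_self 1 (by positivity)
    exact (integral_floor_wfun_of_lt_one hs).symm
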